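/- Let V be a finite-dimensional real inner product space, S an invertible symmetric endomorphism of V, and dμ(x) = (1/Z) e^{−(i/2)⟨x, Sx⟩} dx the normalized (Z chosen so that ∫_∼ 1 dμ = 1) non-degenerate centered oscillatory Gauss measure. Then for all v, w ∈ V: lim_{ε→0⁺} ∫_V ⟨v,x⟩ e^{−ε‖x‖²} dμ(x) = 0 and lim_{ε→0⁺} ∫_V ⟨v,x⟩⟨w,x⟩ e^{−ε‖x‖²} dμ(x) = (1/i)·⟨v, S⁻¹ w⟩. -/

import Mathlib

/-!
After diagonalising `S` in an orthonormal eigenbasis, the regularised integrand factorises into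
one-dimensional complex Gaussians `e^{-(ε + iλ_k/2) y_k²}`, whose zeroth, first and second
moments are `√(π/c)`, `0` and `√(π/c)/(2c)`. The first moment of the measure therefore vanishes
for every `ε` (the integrand is odd), and the second one is an explicit continuous function of
`ε ≥ 0`. At `ε = 0` the Gaussian factors `√(π/(iλ_k/2))` cancel the normalisation `Z` exactly,
because `√(2π/(iλ))·√(iλ) = √(2π)` for the principal square root, and what remains is
`∑_k v_k w_k/(iλ_k) = (1/i)⟨v, S⁻¹w⟩`.
-/

open MeasureTheory Filter Topology Complex
open scoped Real RealInnerProductSpace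

theorem integral_eq_zero_of_odd {E F : Type*} [MeasurableSpace E] [AddGroup E] [MeasurableNeg E]
    [NormedAddCommGroup F] [NormedSpace ℝ F] (μ : Measure E) [μ.IsNegInvariant]
    {f : E → F} (hf : ∀ x, f (-x) = -f x) : ∫ x, f x ∂μ = 0 := by
  have h := integral_neg_eq_self f μ
  simp only [hf, integral_neg] at h
  rw [neg_eq_iff_add_eq_zero, ← two_smul ℝ, smul_eq_zero] at h
  exact h.resolve_left two_ne_zero

theorem integral_ofReal_mul_cexp_neg_mul_sq (b : ℂ) :
    ∫ x : ℝ, (x : ℂ) * cexp (-b * (x : ℂ) ^ 2) = 0 :=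
  integral_eq_zero_of_odd volume fun x => by rw [ofReal_neg, neg_sq, neg_mul]

theorem integrable_ofReal_pow_mul_cexp_neg_mul_sq (n : ℕ) {b : ℂ} (hb : 0 < b.re) :
    Integrable fun x : ℝ => (x : ℂ) ^ n * cexp (-b * (x : ℂ) ^ 2) := by
  have h := integrable_rpow_mul_exp_neg_mul_sq hb (s := n) (by linarith [n.cast_nonneg (α := ℝ)])
  refine h.norm.mono' (by fun_prop) (Eventually.of_forall fun x => le_of_eq ?_)
  rw [norm_mul, norm_cexp_neg_mul_sq, Real.rpow_natCast, norm_mul, norm_pow, norm_pow, norm_real,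
    Real.norm_of_nonneg (Real.exp_pos _).le]

theorem integral_ofReal_sq_mul_cexp_neg_mul_sq {b : ℂ} (hb : 0 < b.re) :
    ∫ x : ℝ, (x : ℂ) ^ 2 * cexp (-b * (x : ℂ) ^ 2) = (π / b) ^ (1 / 2 : ℂ) / (2 * b) := by
  have hb0 : b ≠ 0 := by contrapose! hb; rw [hb, zero_re]
  -- `x² e^{-bx²} - (2b)⁻¹ e^{-bx²}` is the derivative of the integrable `-(2b)⁻¹ x e^{-bx²}`
  have hderiv : ∀ x : ℝ, HasDerivAt (fun x : ℝ => -(2 * b)⁻¹ * ((x : ℂ) * cexp (-b * (x : ℂ) ^ 2)))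
      ((x : ℂ) ^ 2 * cexp (-b * (x : ℂ) ^ 2) - (2 * b)⁻¹ * cexp (-b * (x : ℂ) ^ 2)) x := by
    intro x
    have := (((hasDerivAt_id' (x : ℂ)).mul
      ((hasDerivAt_pow 2 (x : ℂ)).const_mul (-b)).cexp).const_mul (-(2 * b)⁻¹)).comp_ofReal
    convert this using 1
    · ext y
      simp only [Pi.mul_apply]
    · push_cast
      field_simp
      ring
  have hzero := integral_eq_zero_of_hasDerivAt_of_integrable hderiv
    ((integrable_ofReal_pow_mul_cexp_neg_mul_sq 2 hb).sub
      ((integrable_cexp_neg_mul_sq hb).const_mul _))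
    ((integrable_mul_cexp_neg_mul_sq hb).const_mul _)
  rw [integral_sub (integrable_ofReal_pow_mul_cexp_neg_mul_sq 2 hb)
    ((integrable_cexp_neg_mul_sq hb).const_mul _), integral_const_mul,
    integral_gaussian_complex hb, sub_eq_zero] at hzero
  rw [hzero]
  field_simp

section ProductGaussian

variable {ι : Type*} [Fintype ι] {c : ι → ℂ}

theorem ofReal_mul_ofReal_eq_prod_pow [DecidableEq ι] (y : ι → ℝ) (i j : ι) :
    (y i : ℂ) * y j = ∏ k, (y k : ℂ) ^ ((if k = i then 1 else 0) + (if k = j then 1 else 0)) := by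
  simp only [pow_add, Finset.prod_mul_distrib, pow_ite, pow_one, pow_zero, Finset.prod_ite_eq',
    Finset.mem_univ, if_true]

theorem integral_ofReal_mul_ofReal_mul_prod_cexp_neg_mul_sq [DecidableEq ι] (hc : ∀ k, 0 < (c k).re)
    (i j : ι) :
    ∫ y : ι → ℝ, (y i : ℂ) * y j * ∏ k, cexp (-c k * (y k : ℂ) ^ 2) =
      if i = j then (∏ k, (π / c k) ^ (1 / 2 : ℂ)) / (2 * c i) else 0 := by
  simp_rw [ofReal_mul_ofReal_eq_prod_pow _ i j, ← Finset.prod_mul_distrib]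
  rw [integral_fintype_prod_volume_eq_prod
    (fun k (t : ℝ) => (t : ℂ) ^ ((if k = i then 1 else 0) + (if k = j then 1 else 0)) *
      cexp (-c k * (t : ℂ) ^ 2))]
  split_ifs with hij
  · subst hij
    have hfactor : ∀ k, ∫ t : ℝ, (t : ℂ) ^ ((if k = i then 1 else 0) + (if k = i then 1 else 0)) *
        cexp (-c k * (t : ℂ) ^ 2) = (π / c k) ^ (1 / 2 : ℂ) * if k = i then (2 * c i)⁻¹ else 1 := by
      intro k
      split_ifs with hki
      · rw [hki, integral_ofReal_sq_mul_cexp_neg_mul_sq (hc i), div_eq_mul_inv]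
      · simp only [add_zero, pow_zero, one_mul, mul_one, integral_gaussian_complex (hc k)]
    simp only [hfactor, Finset.prod_mul_distrib, Finset.prod_ite_eq', Finset.mem_univ, if_true,
      div_eq_mul_inv]
  · refine Finset.prod_eq_zero (Finset.mem_univ i) ?_
    simp only [if_true, if_neg hij, add_zero, pow_one]
    exact integral_ofReal_mul_cexp_neg_mul_sq (c i)

theorem integrable_ofReal_mul_ofReal_mul_prod_cexp_neg_mul_sq (hc : ∀ k, 0 < (c k).re) (i j : ι) :
    Integrable fun y : ι → ℝ => (y i : ℂ) * y j * ∏ k, cexp (-c k * (y k : ℂ) ^ 2) := by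
  classical
  simp_rw [ofReal_mul_ofReal_eq_prod_pow _ i j, ← Finset.prod_mul_distrib]
  exact Integrable.fintype_prod fun k => integrable_ofReal_pow_mul_cexp_neg_mul_sq _ (hc k)

theorem integral_sum_mul_sum_mul_prod_cexp_neg_mul_sq (hc : ∀ k, 0 < (c k).re) (a e : ι → ℂ) :
    ∫ y : ι → ℝ, (∑ i, a i * y i) * (∑ j, e j * y j) * ∏ k, cexp (-c k * (y k : ℂ) ^ 2) =
      (∏ k, (π / c k) ^ (1 / 2 : ℂ)) * ∑ k, a k * e k / (2 * c k) := by
  classical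
  have hexpand : ∀ y : ι → ℝ, (∑ i, a i * y i) * (∑ j, e j * y j) *
      ∏ k, cexp (-c k * (y k : ℂ) ^ 2) =
        ∑ i, ∑ j, a i * e j * ((y i : ℂ) * y j * ∏ k, cexp (-c k * (y k : ℂ) ^ 2)) := by
    intro y
    rw [Finset.sum_mul_sum, Finset.sum_mul]
    refine Finset.sum_congr rfl fun i _ => ?_
    rw [Finset.sum_mul]
    exact Finset.sum_congr rfl fun j _ => by ring
  have hint := integrable_ofReal_mul_ofReal_mul_prod_cexp_neg_mul_sq hc
  simp_rw [hexpand]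
  rw [integral_finsetSum _ fun i _ => integrable_finsetSum _ fun j _ => (hint i j).const_mul _]
  simp_rw [integral_finsetSum _ fun j _ => (hint _ j).const_mul _, integral_const_mul,
    integral_ofReal_mul_ofReal_mul_prod_cexp_neg_mul_sq hc, mul_ite, mul_zero,
    Finset.sum_ite_eq, Finset.mem_univ, if_true, Finset.mul_sum]
  exact Finset.sum_congr rfl fun k _ => by ring

end ProductGaussian

namespace OrthonormalBasis

variable {E : Type*} [NormedAddCommGroup E] [InnerProductSpace ℝ E] {ι : Type*} [Fintype ι]
  (b : OrthonormalBasis ι ℝ E)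

theorem inner_sum_smul (v : E) (y : ι → ℝ) : ⟪v, ∑ i, y i • b i⟫ = ∑ i, ⟪b i, v⟫ * y i := by
  simp only [inner_sum, real_inner_smul_right, real_inner_comm v, mul_comm]

theorem norm_sum_smul_sq (y : ι → ℝ) : ‖∑ i, y i • b i‖ ^ 2 = ∑ i, y i ^ 2 := by
  rw [← real_inner_self_eq_norm_sq, b.orthonormal.inner_sum]
  simp [sq]

theorem inner_sum_smul_map_sum_smul {S : E →ₗ[ℝ] E} {lam : ι → ℝ}
    (hS : ∀ i, S (b i) = lam i • b i) (y : ι → ℝ) :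
    ⟪∑ i, y i • b i, S (∑ i, y i • b i)⟫ = ∑ i, lam i * y i ^ 2 := by
  have hSy : S (∑ i, y i • b i) = ∑ i, (lam i * y i) • b i := by
    simp only [map_sum, map_smul, hS, smul_smul, mul_comm]
  rw [hSy, b.orthonormal.inner_sum]
  simp [sq, mul_left_comm]

theorem inner_map_eq_sum_div {S T : E →ₗ[ℝ] E} {lam : ι → ℝ} (hS : ∀ i, S (b i) = lam i • b i)
    (hlam : ∀ i, lam i ≠ 0) (hTS : T ∘ₗ S = LinearMap.id) (v w : E) :
    ⟪v, T w⟫ = ∑ i, ⟪b i, v⟫ * ⟪b i, w⟫ / lam i := by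
  have hT : ∀ i, T (b i) = (lam i)⁻¹ • b i := by
    intro i
    have h := LinearMap.congr_fun hTS (b i)
    rw [LinearMap.comp_apply, hS, map_smul, LinearMap.id_apply] at h
    conv_rhs => rw [← h, smul_smul, inv_mul_cancel₀ (hlam i), one_smul]
  conv_lhs => rw [← b.sum_repr' w]
  simp only [map_sum, map_smul, hT, smul_smul, inner_sum, real_inner_smul_right, real_inner_comm v]
  exact Finset.sum_congr rfl fun i _ => by ring

variable [FiniteDimensional ℝ E] [MeasurableSpace E] [BorelSpace E]

theorem integral_comp_sum_smul {F : Type*} [NormedAddCommGroup F] [NormedSpace ℝ F] (f : E → F) :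
    ∫ y : ι → ℝ, f (∑ i, y i • b i) = ∫ x, f x := by
  have hΦ : MeasurePreserving ((MeasurableEquiv.toLp 2 (ι → ℝ)).trans b.measurableEquiv.symm) :=
    b.measurePreserving_measurableEquiv.symm.comp (PiLp.volume_preserving_toLp ι)
  rw [← hΦ.integral_comp' f]
  congr 1 with y
  exact congrArg f (b.sum_repr_symm (WithLp.toLp 2 y))

theorem integral_inner_mul_inner_mul_cexp_neg_mul_norm_sq_mul_cexp_inner_map
    {S : E →ₗ[ℝ] E} {lam : ι → ℝ} (hS : ∀ i, S (b i) = lam i • b i) {ε : ℝ} (hε : 0 < ε)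
    (v w : E) :
    ∫ x, (⟪v, x⟫ : ℂ) * (⟪w, x⟫ : ℂ) * cexp (-((ε * ‖x‖ ^ 2 : ℝ) : ℂ)) *
        cexp (-(I / 2) * (⟪x, S x⟫ : ℂ)) =
      (∏ k, (π / (ε + I * lam k / 2)) ^ (1 / 2 : ℂ)) *
        ∑ k, ((⟪b k, v⟫ * ⟪b k, w⟫ : ℝ) : ℂ) / (2 * (ε + I * lam k / 2)) := by
  simp only [ofReal_mul]
  rw [← integral_sum_mul_sum_mul_prod_cexp_neg_mul_sq (fun k => by simpa using hε),
    ← b.integral_comp_sum_smul]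
  congr 1 with y
  rw [b.inner_sum_smul, b.inner_sum_smul, b.norm_sum_smul_sq, b.inner_sum_smul_map_sum_smul hS,
    mul_assoc _ (cexp _), ← Complex.exp_add, ← Complex.exp_sum]
  push_cast
  congr 2
  rw [Finset.mul_sum, Finset.mul_sum, ← Finset.sum_neg_distrib, ← Finset.sum_add_distrib]
  exact Finset.sum_congr rfl fun k _ => by ring

end OrthonormalBasis

theorem cpow_one_half_eq_of_sq_eq {u z : ℂ} (hu : 0 < u.re) (h : u ^ 2 = z) :
    z ^ (1 / 2 : ℂ) = u := by
  rw [← h, one_div, sq_cpow_two_inv hu]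

/-- The paper's `√(iλ)`. -/
noncomputable def sqrtIMul (l : ℝ) : ℂ :=
  cexp (π * I / 4 * (Real.sign l : ℝ)) * ((|l| ^ ((1 : ℝ) / 2) : ℝ) : ℂ)

/-- The paper's `Z = (2π)^{d/2} / det^{1/2}(iS)`, for `S` with eigenvalues `lam`. -/
noncomputable def oscGaussNormalization {ι : Type*} [Fintype ι] (lam : ι → ℝ) : ℂ :=
  (((2 * π) ^ ((Fintype.card ι : ℝ) / 2) : ℝ) : ℂ) / ∏ k, sqrtIMul (lam k)

theorem sqrtIMul_sq (l : ℝ) : sqrtIMul l ^ 2 = I * l := by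
  have habs : ((|l| ^ ((1 : ℝ) / 2) : ℝ) : ℂ) ^ 2 = |l| := by
    rw [← Real.sqrt_eq_rpow, ← ofReal_pow, Real.sq_sqrt (abs_nonneg l)]
  rw [sqrtIMul, mul_pow, habs, ← Complex.exp_nat_mul]
  rcases lt_trichotomy l 0 with hl | rfl | hl
  · rw [Real.sign_of_neg hl, abs_of_neg hl]
    have : (2 : ℕ) * (π * I / 4 * ((-1 : ℝ) : ℂ)) = -(π / 2 * I) := by push_cast; ring
    rw [this, Complex.exp_neg, exp_pi_div_two_mul_I, inv_I]
    push_cast; ring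
  · simp
  · rw [Real.sign_of_pos hl, abs_of_pos hl]
    have : (2 : ℕ) * (π * I / 4 * ((1 : ℝ) : ℂ)) = π / 2 * I := by push_cast; ring
    rw [this, exp_pi_div_two_mul_I, mul_comm]

theorem re_sqrtIMul_pos {l : ℝ} (hl : l ≠ 0) : 0 < (sqrtIMul l).re := by
  have hcos : 0 < Real.cos (π / 4 * Real.sign l) := by
    rcases Real.sign_apply_eq_of_ne_zero l hl with h | h <;>
      simp [h, Real.cos_pi_div_four]
  have hre : (sqrtIMul l).re = Real.cos (π / 4 * Real.sign l) * |l| ^ ((1 : ℝ) / 2) := by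
    simp [sqrtIMul, Complex.exp_re, mul_comm, mul_div_assoc]
  rw [hre]
  exact mul_pos hcos (Real.rpow_pos_of_pos (abs_pos.mpr hl) _)

theorem sqrtIMul_ne_zero {l : ℝ} (hl : l ≠ 0) : sqrtIMul l ≠ 0 := fun h => by
  simpa [h] using re_sqrtIMul_pos hl

theorem cpow_one_half_pi_div_mul_sqrtIMul {l : ℝ} (hl : l ≠ 0) :
    ((π : ℂ) / (I * l / 2)) ^ (1 / 2 : ℂ) * sqrtIMul l = (((2 * π) ^ ((1 : ℝ) / 2) : ℝ) : ℂ) := by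
  set r : ℝ := (2 * π) ^ ((1 : ℝ) / 2) with hr_def
  have hr : 0 < r := Real.rpow_pos_of_pos Real.two_pi_pos _
  have hs := sqrtIMul_ne_zero hl
  have hroot : ((π : ℂ) / (I * l / 2)) ^ (1 / 2 : ℂ) = r / sqrtIMul l := by
    refine cpow_one_half_eq_of_sq_eq ?_ ?_
    · rw [div_eq_mul_inv, re_ofReal_mul, inv_re]
      exact mul_pos hr (div_pos (re_sqrtIMul_pos hl) (normSq_pos.mpr hs))
    · have hr2 : (r : ℂ) ^ 2 = 2 * π := by
        rw [← ofReal_pow, hr_def, ← Real.sqrt_eq_rpow, Real.sq_sqrt Real.two_pi_pos.le]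
        push_cast; ring
      rw [div_pow, hr2, sqrtIMul_sq]
      field_simp
  rw [hroot, div_mul_cancel₀ _ hs]

theorem one_div_oscGaussNormalization_mul_prod_cpow_one_half {ι : Type*} [Fintype ι]
    {lam : ι → ℝ} (hlam : ∀ k, lam k ≠ 0) :
    1 / oscGaussNormalization lam * ∏ k, ((π : ℂ) / (I * lam k / 2)) ^ (1 / 2 : ℂ) = 1 := by
  have hQ : ∏ k, sqrtIMul (lam k) ≠ 0 :=
    Finset.prod_ne_zero_iff.mpr fun k _ => sqrtIMul_ne_zero (hlam k)
  have hR : (((2 * π) ^ ((Fintype.card ι : ℝ) / 2) : ℝ) : ℂ) ≠ 0 :=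
    ofReal_ne_zero.mpr (Real.rpow_pos_of_pos Real.two_pi_pos _).ne'
  have hPQ : (∏ k, ((π : ℂ) / (I * lam k / 2)) ^ (1 / 2 : ℂ)) * ∏ k, sqrtIMul (lam k) =
      (((2 * π) ^ ((Fintype.card ι : ℝ) / 2) : ℝ) : ℂ) := by
    rw [← Finset.prod_mul_distrib, Finset.prod_congr rfl fun k _ =>
      cpow_one_half_pi_div_mul_sqrtIMul (hlam k), Finset.prod_const, Finset.card_univ,
      ← ofReal_pow, ← Real.rpow_mul_natCast Real.two_pi_pos.le]
    ring_nf
  rw [← hPQ] at hR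
  rw [oscGaussNormalization, ← hPQ, mul_div_cancel_right₀ _ hQ,
    one_div_mul_cancel (left_ne_zero_of_mul hR)]

theorem pi_div_I_mul_div_two_mem_slitPlane {l : ℝ} (hl : l ≠ 0) :
    (π : ℂ) / (I * l / 2) ∈ slitPlane := by
  rw [mem_slitPlane_iff]
  right
  simp [div_im, hl, Real.pi_ne_zero, normSq]

theorem tendsto_prod_cpow_one_half_mul_sum {ι : Type*} [Fintype ι] {lam : ι → ℝ}
    (hlam : ∀ k, lam k ≠ 0) (a : ι → ℂ) :
    Tendsto (fun ε : ℝ => (∏ k, ((π : ℂ) / (ε + I * lam k / 2)) ^ (1 / 2 : ℂ)) *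
        ∑ k, a k / (2 * (ε + I * lam k / 2))) (𝓝[>] 0)
      (𝓝 ((∏ k, ((π : ℂ) / (I * lam k / 2)) ^ (1 / 2 : ℂ)) * ∑ k, a k / (I * lam k))) := by
  have hc : ∀ k, Tendsto (fun ε : ℝ => (ε : ℂ) + I * lam k / 2) (𝓝 0) (𝓝 (I * lam k / 2)) :=
    fun k => (continuous_ofReal.add continuous_const).tendsto' 0 _ (by simp)
  have hne : ∀ k, I * lam k / 2 ≠ 0 := fun k => by simp [hlam k]
  refine Tendsto.mono_left ?_ nhdsWithin_le_nhds
  refine (tendsto_finsetProd _ fun k _ => (continuousAt_cpow_const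
    (pi_div_I_mul_div_two_mem_slitPlane (hlam k))).tendsto.comp
      (tendsto_const_nhds.div (hc k) (hne k))).mul (tendsto_finsetSum _ fun k _ => ?_)
  have h := (tendsto_const_nhds (x := a k)).div ((hc k).const_mul 2)
    (mul_ne_zero two_ne_zero (hne k))
  rwa [show 2 * (I * lam k / 2) = I * lam k by ring] at h

theorem tendsto_one_div_oscGaussNormalization_mul {ι : Type*} [Fintype ι] {lam : ι → ℝ}
    (hlam : ∀ k, lam k ≠ 0) (a : ι → ℝ) :
    Tendsto (fun ε : ℝ => 1 / oscGaussNormalization lam *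
        ((∏ k, ((π : ℂ) / (ε + I * lam k / 2)) ^ (1 / 2 : ℂ)) *
          ∑ k, (a k : ℂ) / (2 * (ε + I * lam k / 2)))) (𝓝[>] 0)
      (𝓝 (1 / I * ((∑ k, a k / lam k : ℝ) : ℂ))) := by
  have h := (tendsto_prod_cpow_one_half_mul_sum hlam fun k => (a k : ℂ)).const_mul
    (1 / oscGaussNormalization lam)
  rw [← mul_assoc, one_div_oscGaussNormalization_mul_prod_cpow_one_half hlam, one_mul] at h
  convert h using 2
  push_cast
  rw [Finset.mul_sum]
  refine Finset.sum_congr rfl fun k _ => ?_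
  have := hlam k
  field_simp

theorem stmt_5_general (d : ℕ)
    (S T : EuclideanSpace ℝ (Fin d) →ₗ[ℝ] EuclideanSpace ℝ (Fin d))
    (lam : Fin d → ℝ)
    (b : OrthonormalBasis (Fin d) ℝ (EuclideanSpace ℝ (Fin d)))
    (hdiag : ∀ i, S (b i) = lam i • b i) (hinv : ∀ i, lam i ≠ 0)
    (hTS : T ∘ₗ S = LinearMap.id)
    (v w : EuclideanSpace ℝ (Fin d)) :
    Tendsto (fun ε : ℝ =>
        ∫ x : EuclideanSpace ℝ (Fin d),
          ((inner ℝ v x : ℝ) : ℂ) * Complex.exp (-((ε * ‖x‖ ^ 2 : ℝ) : ℂ)) *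
            ((1 : ℂ) / ((((2 * Real.pi) ^ ((d : ℝ) / 2) : ℝ) : ℂ) /
                ∏ i, (Complex.exp (Real.pi * Complex.I / 4 * (Real.sign (lam i) : ℝ)) *
                  ((|lam i| ^ ((1 : ℝ) / 2) : ℝ) : ℂ))) *
              Complex.exp (-(Complex.I / 2) * ((inner ℝ x (S x) : ℝ) : ℂ))))
      (𝓝[>] (0 : ℝ)) (𝓝 0)
    ∧
    Tendsto (fun ε : ℝ =>
        ∫ x : EuclideanSpace ℝ (Fin d),
          ((inner ℝ v x : ℝ) : ℂ) * ((inner ℝ w x : ℝ) : ℂ) *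
            Complex.exp (-((ε * ‖x‖ ^ 2 : ℝ) : ℂ)) *
            ((1 : ℂ) / ((((2 * Real.pi) ^ ((d : ℝ) / 2) : ℝ) : ℂ) /
                ∏ i, (Complex.exp (Real.pi * Complex.I / 4 * (Real.sign (lam i) : ℝ)) *
                  ((|lam i| ^ ((1 : ℝ) / 2) : ℝ) : ℂ))) *
              Complex.exp (-(Complex.I / 2) * ((inner ℝ x (S x) : ℝ) : ℂ))))
      (𝓝[>] (0 : ℝ))
      (𝓝 ((1 / Complex.I) * ((inner ℝ v (T w) : ℝ) : ℂ))) := by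
  refine ⟨tendsto_const_nhds.congr fun ε => (integral_eq_zero_of_odd volume fun x => ?_).symm, ?_⟩
  · simp only [inner_neg_right, inner_neg_left, map_neg, neg_neg, norm_neg, ofReal_neg]
    ring
  have hZ : oscGaussNormalization lam = (((2 * Real.pi) ^ ((d : ℝ) / 2) : ℝ) : ℂ) /
      ∏ i, (Complex.exp (Real.pi * Complex.I / 4 * (Real.sign (lam i) : ℝ)) *
        ((|lam i| ^ ((1 : ℝ) / 2) : ℝ) : ℂ)) := by
    rw [oscGaussNormalization, Fintype.card_fin]
    rfl
  rw [← hZ, b.inner_map_eq_sum_div hdiag hinv hTS]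
  refine (tendsto_one_div_oscGaussNormalization_mul hinv _).congr'
    (eventually_nhdsWithin_of_forall (s := Set.Ioi 0) fun ε hε => ?_)
  rw [← b.integral_inner_mul_inner_mul_cexp_neg_mul_norm_sq_mul_cexp_inner_map hdiag hε,
    ← integral_const_mul]
  congr 1 with x
  ring

/-- First and second moments of the normalized non-degenerate centered oscillatory
Gauss measure `dμ(x) = (1/Z) e^{−(i/2)⟨x,Sx⟩} dx`, where
`Z = (2π)^{d/2}/∏_k √(iλ_k)` and `T = S⁻¹`:
`∫_∼ ⟨v,x⟩ dμ = 0` and `∫_∼ ⟨v,x⟩⟨w,x⟩ dμ = (1/i)·⟨v, S⁻¹w⟩`. -/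
theorem stmt_5 (d : ℕ)
    (S T : EuclideanSpace ℝ (Fin d) →ₗ[ℝ] EuclideanSpace ℝ (Fin d))
    (lam : Fin d → ℝ)
    (b : OrthonormalBasis (Fin d) ℝ (EuclideanSpace ℝ (Fin d)))
    (hdiag : ∀ i, S (b i) = lam i • b i) (hinv : ∀ i, lam i ≠ 0)
    (hST : S ∘ₗ T = LinearMap.id) (hTS : T ∘ₗ S = LinearMap.id)
    (v w : EuclideanSpace ℝ (Fin d)) :
    Tendsto (fun ε : ℝ =>
        ∫ x : EuclideanSpace ℝ (Fin d),
          ((inner ℝ v x : ℝ) : ℂ) * Complex.exp (-((ε * ‖x‖ ^ 2 : ℝ) : ℂ)) *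
            ((1 : ℂ) / ((((2 * Real.pi) ^ ((d : ℝ) / 2) : ℝ) : ℂ) /
                ∏ i, (Complex.exp (Real.pi * Complex.I / 4 * (Real.sign (lam i) : ℝ)) *
                  ((|lam i| ^ ((1 : ℝ) / 2) : ℝ) : ℂ))) *
              Complex.exp (-(Complex.I / 2) * ((inner ℝ x (S x) : ℝ) : ℂ))))
      (𝓝[>] (0 : ℝ)) (𝓝 0)
    ∧
    Tendsto (fun ε : ℝ =>
        ∫ x : EuclideanSpace ℝ (Fin d),
          ((inner ℝ v x : ℝ) : ℂ) * ((inner ℝ w x : ℝ) : ℂ) *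
            Complex.exp (-((ε * ‖x‖ ^ 2 : ℝ) : ℂ)) *
            ((1 : ℂ) / ((((2 * Real.pi) ^ ((d : ℝ) / 2) : ℝ) : ℂ) /
                ∏ i, (Complex.exp (Real.pi * Complex.I / 4 * (Real.sign (lam i) : ℝ)) *
                  ((|lam i| ^ ((1 : ℝ) / 2) : ℝ) : ℂ))) *
              Complex.exp (-(Complex.I / 2) * ((inner ℝ x (S x) : ℝ) : ℂ))))
      (𝓝[>] (0 : ℝ))
      (𝓝 ((1 / Complex.I) * ((inner ℝ v (T w) : ℝ) : ℂ))) :=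
  stmt_5_general d S T lam b hdiag hinv hTS v w
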